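/- arXiv:2110.02480 — 4 statements merged into one kernel-verified Lean document; each statement's English description precedes it below -/
import Mathlib

section
/- KM update postulate U4 holds for PEKB belief update on consistent PEKBs: for all consistent PEKBs P, P', Q, Q', if P ≡ P' and Q ≡ Q', then P ⋄ Q ≡ P' ⋄ Q'. -/
/-- Modal formulae over atomic propositions `Atom` and agents `Agt`. -/
inductive Form (Atom Agt : Type) : Type
  | top : Form Atom Agt
  | bot : Form Atom Agt
  | atom : Atom → Form Atom Agt
  | neg : Form Atom Agt → Form Atom Agt
  | and : Form Atom Agt → Form Atom Agt → Form Atom Agt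
  | box : Agt → Form Atom Agt → Form Atom Agt

/-- `◇_i φ` abbreviates `¬ B_i ¬ φ`. -/
def Form.dia {Atom Agt : Type} (i : Agt) (φ : Form Atom Agt) : Form Atom Agt :=
  Form.neg (Form.box i (Form.neg φ))

/-- A Kripke structure: worlds, a valuation, and an accessibility relation per agent. -/
structure Kripke (Atom Agt : Type) where
  W : Type
  val : W → Atom → Prop
  R : Agt → W → W → Prop

/-- Every accessibility relation is serial: every world has a successor. -/
def Kripke.Serial {Atom Agt : Type} (M : Kripke Atom Agt) : Prop :=
  ∀ (i : Agt) (w : M.W), ∃ v : M.W, M.R i w v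

/-- Satisfaction of a formula at a world of a Kripke structure. -/
def Sat {Atom Agt : Type} (M : Kripke Atom Agt) : M.W → Form Atom Agt → Prop
  | _, Form.top => True
  | _, Form.bot => False
  | w, Form.atom p => M.val w p
  | w, Form.neg φ => ¬ Sat M w φ
  | w, Form.and φ ψ => Sat M w φ ∧ Sat M w ψ
  | w, Form.box i φ => ∀ v : M.W, M.R i w v → Sat M v φ

/-- KD_n entailment from a set of formulae: truth at every world of every serial
Kripke structure satisfying all members of `S`. -/
def SetEntails {Atom Agt : Type} (S : Set (Form Atom Agt)) (φ : Form Atom Agt) : Prop :=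
  ∀ (M : Kripke Atom Agt), M.Serial → ∀ w : M.W, (∀ ψ ∈ S, Sat M w ψ) → Sat M w φ

/-- KD_n entailment between single formulae. -/
def Entails {Atom Agt : Type} (φ ψ : Form Atom Agt) : Prop :=
  SetEntails {φ} ψ

/-- A set of formulae is consistent iff all its members hold simultaneously at
some world of some serial Kripke structure. -/
def Consistent {Atom Agt : Type} (S : Set (Form Atom Agt)) : Prop :=
  ∃ (M : Kripke Atom Agt), M.Serial ∧ ∃ w : M.W, ∀ ψ ∈ S, Sat M w ψ

/-- Restricted modal literals: a (possibly empty) sequence of `B_i`/`◇_i`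
operators applied to a propositional literal. -/
inductive IsRML {Atom Agt : Type} : Form Atom Agt → Prop
  | pos (p : Atom) : IsRML (Form.atom p)
  | neg (p : Atom) : IsRML (Form.neg (Form.atom p))
  | box (i : Agt) {φ : Form Atom Agt} : IsRML φ → IsRML (Form.box i φ)
  | dia (i : Agt) {φ : Form Atom Agt} : IsRML φ → IsRML (Form.dia i φ)

/-- A proper epistemic knowledge base: a finite set of RMLs. -/
def IsPEKB {Atom Agt : Type} (S : Set (Form Atom Agt)) : Prop :=
  S.Finite ∧ ∀ φ ∈ S, IsRML φ

/-- Entailment of every member of a set (PEKB) from a set. -/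
def KBEntails {Atom Agt : Type} (S T : Set (Form Atom Agt)) : Prop :=
  ∀ φ ∈ T, SetEntails S φ

/-- Logical equivalence of two sets of formulae. -/
def KBEquiv {Atom Agt : Type} (S T : Set (Form Atom Agt)) : Prop :=
  KBEntails S T ∧ KBEntails T S

/-- Upward closure: the RMLs entailed by some member of `S`. -/
def upSet {Atom Agt : Type} (S : Set (Form Atom Agt)) : Set (Form Atom Agt) :=
  {ψ | IsRML ψ ∧ ∃ φ ∈ S, Entails φ ψ}

/-- Downward closure: the RMLs entailing some member of `S`. -/
def downSet {Atom Agt : Type} (S : Set (Form Atom Agt)) : Set (Form Atom Agt) :=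
  {ψ | IsRML ψ ∧ ∃ φ ∈ S, Entails ψ φ}

/-- Maximal elements of a set of RMLs under entailment. -/
def maxSet {Atom Agt : Type} (S : Set (Form Atom Agt)) : Set (Form Atom Agt) :=
  {φ ∈ S | ∀ ψ ∈ S, Entails ψ φ → Entails φ ψ}

/-- NNF-negation of an RML: push the negation through the modalities. -/
def nnfNeg {Atom Agt : Type} : Form Atom Agt → Form Atom Agt
  | Form.atom p => Form.neg (Form.atom p)
  | Form.neg (Form.atom p) => Form.atom p
  | Form.neg (Form.box i (Form.neg φ)) => Form.box i (nnfNeg φ)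
  | Form.box i φ => Form.dia i (nnfNeg φ)
  | φ => φ

/-- NNF-negation of every member of a PEKB. -/
def negKB {Atom Agt : Type} (S : Set (Form Atom Agt)) : Set (Form Atom Agt) :=
  nnfNeg '' S

/-- Belief erasure: `P ⊖ Q = max(↑P ∖ ↓Q)`. -/
def eraseKB {Atom Agt : Type} (P Q : Set (Form Atom Agt)) : Set (Form Atom Agt) :=
  maxSet (upSet P \ downSet Q)

/-- Belief update: `P ⋄ Q = max((P ⊖ ¬Q) ∪ Q)`. -/
def updateKB {Atom Agt : Type} (P Q : Set (Form Atom Agt)) : Set (Form Atom Agt) :=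
  maxSet (eraseKB P (negKB Q) ∪ Q)

/-- Meet: `P ⊓ Q = max(↑P ∩ ↑Q)`. -/
def meetKB {Atom Agt : Type} (P Q : Set (Form Atom Agt)) : Set (Form Atom Agt) :=
  maxSet (upSet P ∩ upSet Q)



namespace U4

variable {Atom Agt : Type}

/-- Syntactic entailment order on RMLs: replace boxes by diamonds. -/
inductive MRel : Form Atom Agt → Form Atom Agt → Prop
  | atomR (p : Atom) : MRel (Form.atom p) (Form.atom p)
  | negR (p : Atom) : MRel (Form.neg (Form.atom p)) (Form.neg (Form.atom p))
  | boxbox (i : Agt) {ψ φ : Form Atom Agt} : MRel ψ φ →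
      MRel (Form.box i ψ) (Form.box i φ)
  | boxdia (i : Agt) {ψ φ : Form Atom Agt} : MRel ψ φ →
      MRel (Form.box i ψ) (Form.neg (Form.box i (Form.neg φ)))
  | diadia (i : Agt) {ψ φ : Form Atom Agt} : MRel ψ φ →
      MRel (Form.neg (Form.box i (Form.neg ψ))) (Form.neg (Form.box i (Form.neg φ)))

lemma mrel_refl {φ : Form Atom Agt} (h : IsRML φ) : MRel φ φ := by
  induction h with
  | pos p => exact MRel.atomR p
  | neg p => exact MRel.negR p
  | box i h ih => exact MRel.boxbox i ih
  | dia i h ih => exact MRel.diadia i ih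

lemma mrel_ne_top {ψ φ : Form Atom Agt} (h : MRel ψ φ) : φ ≠ Form.top := by
  cases h <;> intro hh <;> cases hh

/-- Soundness of MRel. -/
lemma sat_of_mrel {ψ φ : Form Atom Agt} (h : MRel ψ φ) :
    ∀ (M : Kripke Atom Agt), M.Serial → ∀ w : M.W, Sat M w ψ → Sat M w φ := by
  induction h with
  | atomR p => intro M _ w h; exact h
  | negR p => intro M _ w h; exact h
  | boxbox i h ih =>
      intro M hs w hw v hv
      exact ih M hs v (hw v hv)
  | boxdia i h ih =>
      intro M hs w hw hcon
      obtain ⟨v, hv⟩ := hs i w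
      exact hcon v hv (ih M hs v (hw v hv))
  | diadia i h ih =>
      intro M hs w hw hcon
      apply hw
      intro v hv hsv
      exact hcon v hv (ih M hs v hsv)

lemma mrel_entails {ψ φ : Form Atom Agt} (h : MRel ψ φ) : Entails ψ φ :=
  fun M hs w hall => sat_of_mrel h M hs w (hall ψ rfl)

/-- diamond count -/
def dc : Form Atom Agt → Nat
  | Form.neg (Form.box _ (Form.neg φ)) => dc φ + 1
  | Form.box _ φ => dc φ
  | Form.neg φ => dc φ
  | _ => 0

lemma mrel_dc {ψ φ : Form Atom Agt} (h : MRel ψ φ) : ψ = φ ∨ dc ψ < dc φ := by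
  induction h with
  | atomR p => exact Or.inl rfl
  | negR p => exact Or.inl rfl
  | boxbox i h ih =>
      rcases ih with rfl | hlt
      · exact Or.inl rfl
      · right; simpa [dc] using hlt
  | @boxdia i ψ φ h ih =>
      right
      have hle : dc ψ ≤ dc φ := by rcases ih with rfl | h' <;> omega
      simp only [dc]
      omega
  | diadia i h ih =>
      rcases ih with rfl | hlt
      · exact Or.inl rfl
      · right; simp only [dc]; omega

end U4

namespace U4

variable {Atom Agt : Type}

lemma isRML_nnfNeg {φ : Form Atom Agt} (h : IsRML φ) : IsRML (nnfNeg φ) := by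
  induction h with
  | pos p => exact IsRML.neg p
  | neg p => exact IsRML.pos p
  | box i h ih => exact IsRML.dia i ih
  | dia i h ih => show IsRML (nnfNeg (Form.neg (Form.box i (Form.neg _)))); exact IsRML.box i ih

lemma sat_nnfNeg {φ : Form Atom Agt} (h : IsRML φ) :
    ∀ (M : Kripke Atom Agt) (w : M.W), Sat M w (nnfNeg φ) ↔ ¬ Sat M w φ := by
  induction h with
  | pos p => intro M w; exact Iff.rfl
  | neg p => intro M w; simp [nnfNeg, Sat]
  | box i h ih =>
      intro M w
      show Sat M w (Form.neg (Form.box i (Form.neg (nnfNeg _)))) ↔ _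
      constructor
      · intro hne hall
        exact hne fun v hv hnn => ((ih M v).mp hnn) (hall v hv)
      · intro hne hall
        exact hne fun v hv => by
          by_contra hc
          exact hall v hv ((ih M v).mpr hc)
  | dia i h ih =>
      intro M w
      show Sat M w (Form.box i (nnfNeg _)) ↔ ¬ Sat M w (Form.neg (Form.box i (Form.neg _)))
      constructor
      · intro hall hne
        exact hne fun v hv hs => ((ih M v).mp (hall v hv)) hs
      · intro hnn v hv
        apply (ih M v).mpr
        intro hs
        apply hnn
        intro hbox
        exact hbox v hv hs

/-- Contraposition of entailment via nnfNeg. -/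
lemma entails_contrapose {a b : Form Atom Agt} (ha : IsRML a) (hb : IsRML b)
    (h : Entails a b) : Entails (nnfNeg b) (nnfNeg a) := by
  intro M hs w hall
  have hnb : ¬ Sat M w b := (sat_nnfNeg hb M w).mp (hall _ rfl)
  apply (sat_nnfNeg ha M w).mpr
  intro hsa
  exact hnb (h M hs w (fun θ hθ => by rwa [Set.mem_singleton_iff.mp hθ]))

/-- Model in which every RML satisfies itself at its own world. -/
def selfModel (Atom Agt : Type) : Kripke Atom Agt where
  W := Form Atom Agt
  val := fun w q => w = Form.atom q
  R := fun i w v => w = Form.box i v ∨ w = Form.neg (Form.box i (Form.neg v)) ∨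
        (v = w ∧ ∀ u : Form Atom Agt,
          w ≠ Form.box i u ∧ w ≠ Form.neg (Form.box i (Form.neg u)))

lemma selfModel_serial : (selfModel Atom Agt).Serial := by
  intro i w
  show ∃ v : Form Atom Agt, (selfModel Atom Agt).R i w v
  have hw : ∀ w' : Form Atom Agt, ∃ v : Form Atom Agt, (selfModel Atom Agt).R i w' v := by
    intro w'
    by_cases h : ∃ u : Form Atom Agt,
        w' = Form.box i u ∨ w' = Form.neg (Form.box i (Form.neg u))
    · obtain ⟨u, hu | hu⟩ := h
      · exact ⟨u, Or.inl hu⟩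
      · exact ⟨u, Or.inr (Or.inl hu)⟩
    · refine ⟨w', Or.inr (Or.inr ⟨rfl, fun u => ?_⟩)⟩
      have := not_or.mp (not_exists.mp h u)
      exact this
  exact hw w

lemma selfModel_sat {φ : Form Atom Agt} (h : IsRML φ) :
    Sat (selfModel Atom Agt) φ φ := by
  induction h with
  | pos p => exact rfl
  | neg p => intro hc; have hc' : Form.neg (Form.atom p) = Form.atom p := hc; cases hc'
  | box i h ih =>
      intro v hv
      rcases hv with hv | hv | hv
      · obtain rfl : _ = v := by injection hv
        exact ih
      · cases hv
      · exact absurd rfl (hv.2 _).1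
  | @dia i φ h ih =>
      intro hall
      have := hall φ (Or.inr (Or.inl rfl))
      exact this ih

lemma consistent_singleton {φ : Form Atom Agt} (h : IsRML φ) :
    Consistent ({φ} : Set (Form Atom Agt)) :=
  ⟨selfModel Atom Agt, selfModel_serial, φ,
    fun ψ hψ => by rw [Set.mem_singleton_iff.mp hψ]; exact selfModel_sat h⟩

end U4

namespace U4

variable {Atom Agt : Type}

/-- Descent of the "formula to refute" component along agent `i`. -/
def Dstep (i : Agt) (c c' : Form Atom Agt) : Prop :=
  (∃ c₀, c = Form.box i c₀ ∧ (c' = c₀ ∨ c' = Form.top)) ∨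
  (∃ c₀, c = Form.neg (Form.box i (Form.neg c₀)) ∧ c' = c₀) ∨
  ((∀ c₀ : Form Atom Agt, c ≠ Form.box i c₀ ∧ c ≠ Form.neg (Form.box i (Form.neg c₀)))
    ∧ c' = Form.top)

/-- Product of a model with a refutation component. -/
def prodModel (M : Kripke Atom Agt) : Kripke Atom Agt where
  W := M.W × Form Atom Agt
  val := fun vc q => vc.2 ≠ Form.atom q ∧ (M.val vc.1 q ∨ vc.2 = Form.neg (Form.atom q))
  R := fun i vc vc' => M.R i vc.1 vc'.1 ∧ Dstep i vc.2 vc'.2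

lemma dstep_exists (i : Agt) (c : Form Atom Agt) : ∃ c', Dstep i c c' := by
  by_cases hb : ∃ c₀, c = Form.box i c₀
  · exact ⟨Form.top, Or.inl ⟨hb.choose, hb.choose_spec, Or.inr rfl⟩⟩
  · by_cases hd : ∃ c₀, c = Form.neg (Form.box i (Form.neg c₀))
    · exact ⟨hd.choose, Or.inr (Or.inl ⟨hd.choose, hd.choose_spec, rfl⟩)⟩
    · refine ⟨Form.top, Or.inr (Or.inr ⟨fun c₀ => ⟨?_, ?_⟩, rfl⟩)⟩
      · exact fun hh => hb ⟨c₀, hh⟩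
      · exact fun hh => hd ⟨c₀, hh⟩

lemma prodModel_serial (M : Kripke Atom Agt) (hM : M.Serial) : (prodModel M).Serial := by
  intro i vc
  obtain ⟨v', hv'⟩ := hM i vc.1
  obtain ⟨c', hc'⟩ := dstep_exists i vc.2
  exact ⟨(v', c'), hv', hc'⟩

/-- Dstep with no top for diamonds: every world `(v, c)` with `c` an RML refutes `c`. -/
lemma prod_refute (M : Kripke Atom Agt) (hM : M.Serial) {c : Form Atom Agt} (hc : IsRML c) :
    ∀ v : M.W, ¬ Sat (prodModel M) (v, c) c := by
  induction hc with
  | pos p =>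
      intro v h
      exact h.1 rfl
  | neg p =>
      intro v h
      exact h ⟨fun hh => (by cases hh), Or.inr rfl⟩
  | @box i c₀ h ih =>
      intro v hsat
      obtain ⟨v', hv'⟩ := hM i v
      exact ih v' (hsat (v', c₀) ⟨hv', Or.inl ⟨c₀, rfl, Or.inl rfl⟩⟩)
  | @dia i c₀ h ih =>
      intro v hsat
      apply hsat
      rintro ⟨v', c'⟩ ⟨hR, hD⟩
      rcases hD with ⟨c₁, heq, _⟩ | ⟨c₁, heq, hc'⟩ | ⟨hall, _⟩
      · cases heq
      · have hc₁ : c₁ = c₀ := by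
          injection heq with h1
          injection h1 with _ h2
          injection h2 with h3
          exact h3.symm
        subst hc₁
        subst hc'
        intro hs
        exact ih v' hs
      · exact absurd rfl (hall c₀).2

end U4

namespace U4

variable {Atom Agt : Type}

lemma prod_preserve (M : Kripke Atom Agt) {ψ : Form Atom Agt} (hψ : IsRML ψ) :
    ∀ (v : M.W) (c : Form Atom Agt), Sat M v ψ → ¬ MRel ψ c →
      Sat (prodModel M) (v, c) ψ := by
  induction hψ with
  | pos p =>
      intro v c hs hnr
      refine ⟨fun hc => hnr ?_, Or.inl hs⟩
      have hc2 : c = Form.atom p := hc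
      rw [hc2]; exact MRel.atomR p
  | neg p =>
      intro v c hs hnr
      rintro ⟨h1, h2 | h2⟩
      · exact hs h2
      · have h2' : c = Form.neg (Form.atom p) := h2
        rw [h2'] at hnr; exact hnr (MRel.negR p)
  | @box i ψ₀ h ih =>
      intro v c hs hnr
      rintro ⟨v', c'⟩ ⟨hR, hD⟩
      have hsv' : Sat M v' ψ₀ := hs v' hR
      rcases hD with ⟨c₀, rfl, hc' | hc'⟩ | ⟨c₀, rfl, hc'⟩ | ⟨_, hc'⟩
      · subst hc'
        exact ih v' c' hsv' fun hr => hnr (MRel.boxbox i hr)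
      · subst hc'
        exact ih v' Form.top hsv' fun hr => mrel_ne_top hr rfl
      · subst hc'
        exact ih v' c' hsv' fun hr => hnr (MRel.boxdia i hr)
      · subst hc'
        exact ih v' Form.top hsv' fun hr => mrel_ne_top hr rfl
  | @dia i ψ₀ h ih =>
      intro v c hs hnr
      -- extract witness from hs : Sat M v (dia i ψ₀)
      have hwit : ∃ v', M.R i v v' ∧ Sat M v' ψ₀ := by
        by_contra hcon
        push_neg at hcon
        exact hs fun v' hv' hsv' => hcon v' hv' hsv'
      obtain ⟨v', hR, hsv'⟩ := hwit
      by_cases hd : ∃ c₀, c = Form.neg (Form.box i (Form.neg c₀))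
      · obtain ⟨c₀, rfl⟩ := hd
        intro hall
        have hst : Sat (prodModel M) (v', c₀) ψ₀ :=
          ih v' c₀ hsv' fun hr => hnr (MRel.diadia i hr)
        exact hall (v', c₀) ⟨hR, Or.inr (Or.inl ⟨c₀, rfl, rfl⟩)⟩ hst
      · -- use top as refutation component
        have hDtop : Dstep i c Form.top := by
          by_cases hb : ∃ c₀, c = Form.box i c₀
          · obtain ⟨c₀, rfl⟩ := hb
            exact Or.inl ⟨c₀, rfl, Or.inr rfl⟩
          · refine Or.inr (Or.inr ⟨fun c₀ => ⟨?_, ?_⟩, rfl⟩)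
            · exact fun hh => hb ⟨c₀, hh⟩
            · exact fun hh => hd ⟨c₀, hh⟩
        intro hall
        have hst : Sat (prodModel M) (v', Form.top) ψ₀ :=
          ih v' Form.top hsv' fun hr => mrel_ne_top hr rfl
        exact hall (v', Form.top) ⟨hR, hDtop⟩ hst

/-- Prime entailment for consistent sets of RMLs. -/
lemma prime {P : Set (Form Atom Agt)} {φ : Form Atom Agt}
    (hP : ∀ ψ ∈ P, IsRML ψ) (hc : Consistent P) (hφ : IsRML φ)
    (h : SetEntails P φ) : ∃ ψ ∈ P, MRel ψ φ := by
  by_contra hcon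
  push_neg at hcon
  obtain ⟨M, hMs, w, hw⟩ := hc
  have hs : (prodModel M).Serial := prodModel_serial M hMs
  have hsat : Sat (prodModel M) (w, φ) φ :=
    h (prodModel M) hs (w, φ)
      (fun ψ hψ => prod_preserve M (hP ψ hψ) w φ (hw ψ hψ) (hcon ψ hψ))
  exact prod_refute M hMs hφ w hsat

/-- Completeness: entailment between RMLs is MRel. -/
lemma entails_mrel {ψ φ : Form Atom Agt} (hψ : IsRML ψ) (hφ : IsRML φ)
    (h : Entails ψ φ) : MRel ψ φ := by
  obtain ⟨χ, hχ, hr⟩ := prime (P := {ψ})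
    (fun θ hθ => by rw [Set.mem_singleton_iff.mp hθ]; exact hψ)
    (consistent_singleton hψ) hφ h
  rwa [Set.mem_singleton_iff.mp hχ] at hr

end U4

namespace U4

variable {Atom Agt : Type}

lemma entails_refl (φ : Form Atom Agt) : Entails φ φ :=
  fun _ _ _ h => h φ rfl

lemma entails_trans {a b c : Form Atom Agt} (h1 : Entails a b) (h2 : Entails b c) :
    Entails a c :=
  fun M hs w hall => h2 M hs w (fun θ hθ => by
    rw [Set.mem_singleton_iff.mp hθ]; exact h1 M hs w hall)

lemma setEntails_of_mem {S : Set (Form Atom Agt)} {φ : Form Atom Agt} (h : φ ∈ S) :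
    SetEntails S φ := fun _ _ _ hall => hall φ h

lemma setEntails_mono {S T : Set (Form Atom Agt)} {φ : Form Atom Agt} (hST : S ⊆ T)
    (h : SetEntails S φ) : SetEntails T φ :=
  fun M hs w hall => h M hs w fun θ hθ => hall θ (hST hθ)

lemma setEntails_cut {S T : Set (Form Atom Agt)} {φ : Form Atom Agt}
    (hTS : KBEntails T S) (h : SetEntails S φ) : SetEntails T φ :=
  fun M hs w hall => h M hs w fun θ hθ => hTS θ hθ M hs w hall

lemma entails_setEntails {S : Set (Form Atom Agt)} {ψ φ : Form Atom Agt}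
    (hψ : ψ ∈ S) (h : Entails ψ φ) : SetEntails S φ :=
  fun M hs w hall => h M hs w (fun θ hθ => by
    rw [Set.mem_singleton_iff.mp hθ]; exact hall ψ hψ)

lemma kbequiv_symm {S T : Set (Form Atom Agt)} (h : KBEquiv S T) : KBEquiv T S :=
  ⟨h.2, h.1⟩

lemma kbequiv_trans {S T U : Set (Form Atom Agt)} (h1 : KBEquiv S T) (h2 : KBEquiv T U) :
    KBEquiv S U :=
  ⟨fun φ hφ => setEntails_cut h1.1 (h2.1 φ hφ),
   fun φ hφ => setEntails_cut h2.2 (h1.2 φ hφ)⟩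

lemma maxSet_subset {S : Set (Form Atom Agt)} : maxSet S ⊆ S := fun _ h => h.1

/-- Every element of a set of RMLs is entailed by a maximal one. -/
lemma maxReach {S : Set (Form Atom Agt)} (hS : ∀ φ ∈ S, IsRML φ) :
    ∀ φ ∈ S, ∃ ψ ∈ maxSet S, Entails ψ φ := by
  suffices h : ∀ n (φ : Form Atom Agt), φ ∈ S → dc φ < n →
      ∃ ψ ∈ maxSet S, Entails ψ φ by
    intro φ hφ
    exact h (dc φ + 1) φ hφ (Nat.lt_succ_self _)
  intro n
  induction n with
  | zero => intro φ _ h; omega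
  | succ n ih =>
    intro φ hφ hlt
    by_cases hmax : φ ∈ maxSet S
    · exact ⟨φ, hmax, entails_refl φ⟩
    · have hex : ∃ ψ ∈ S, Entails ψ φ ∧ ¬ Entails φ ψ := by
        by_contra hcon
        push_neg at hcon
        exact hmax ⟨hφ, fun ψ hψ he => by
          by_contra hne
          exact hne (hcon ψ hψ he)⟩
      obtain ⟨ψ, hψS, he, hne⟩ := hex
      have hrel := entails_mrel (hS ψ hψS) (hS φ hφ) he
      have hneq : ψ ≠ φ := by rintro rfl; exact hne he
      have hdc : dc ψ < dc φ := (mrel_dc hrel).resolve_left hneq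
      obtain ⟨χ, hχ, hce⟩ := ih ψ hψS (by omega)
      exact ⟨χ, hχ, entails_trans hce he⟩

lemma maxSet_equiv {S : Set (Form Atom Agt)} (hS : ∀ φ ∈ S, IsRML φ) :
    KBEquiv (maxSet S) S :=
  ⟨fun φ hφ =>
      let ⟨ψ, hψ, he⟩ := maxReach hS φ hφ
      entails_setEntails hψ he,
   fun φ hφ => setEntails_of_mem (maxSet_subset hφ)⟩

lemma upSet_sub {P P' : Set (Form Atom Agt)} (hP' : ∀ ψ ∈ P', IsRML ψ)
    (hP'c : Consistent P') (hent : KBEntails P' P) : upSet P ⊆ upSet P' := by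
  rintro φ ⟨hr, ψ, hψ, he⟩
  have h2 : SetEntails P' φ := setEntails_cut hent (entails_setEntails hψ he)
  obtain ⟨ψ', hψ', hrel⟩ := prime hP' hP'c hr h2
  exact ⟨hr, ψ', hψ', mrel_entails hrel⟩

lemma downSet_negKB_sub {Q Q' : Set (Form Atom Agt)}
    (hQ : ∀ q ∈ Q, IsRML q) (hQ' : ∀ q ∈ Q', IsRML q)
    (hQ'c : Consistent Q') (hent : KBEntails Q' Q) :
    downSet (negKB Q) ⊆ downSet (negKB Q') := by
  rintro ψ ⟨hr, θ, hθ, he⟩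
  obtain ⟨q, hq, rfl⟩ := hθ
  obtain ⟨q', hq', hrel⟩ := prime hQ' hQ'c (hQ q hq) (hent q hq)
  have hcontr : Entails (nnfNeg q) (nnfNeg q') :=
    entails_contrapose (hQ' q' hq') (hQ q hq) (mrel_entails hrel)
  exact ⟨hr, nnfNeg q', ⟨q', hq', rfl⟩, entails_trans he hcontr⟩

end U4


/-- KM update postulate U4 for PEKB belief update on consistent
PEKBs: if `P ≡ P'` and `Q ≡ Q'`, then `P ⋄ Q ≡ P' ⋄ Q'`. -/
theorem km_update_u4 {Atom Agt : Type}
    (P P' Q Q' : Set (Form Atom Agt))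
    (hP : IsPEKB P) (hP' : IsPEKB P') (hQ : IsPEKB Q) (hQ' : IsPEKB Q')
    (hPc : Consistent P) (hP'c : Consistent P') (hQc : Consistent Q) (hQ'c : Consistent Q')
    (hPP : KBEquiv P P') (hQQ : KBEquiv Q Q') :
    KBEquiv (updateKB P Q) (updateKB P' Q') := by
  have hupeq : upSet P = upSet P' :=
    Set.Subset.antisymm (U4.upSet_sub hP'.2 hP'c hPP.2) (U4.upSet_sub hP.2 hPc hPP.1)
  have hdeq : downSet (negKB Q) = downSet (negKB Q') :=
    Set.Subset.antisymm (U4.downSet_negKB_sub hQ.2 hQ'.2 hQ'c hQQ.2)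
      (U4.downSet_negKB_sub hQ'.2 hQ.2 hQc hQQ.1)
  have hE : eraseKB P (negKB Q) = eraseKB P' (negKB Q') := by
    unfold eraseKB
    rw [hupeq, hdeq]
  have hErml : ∀ φ ∈ eraseKB P (negKB Q), IsRML φ := by
    intro φ h
    exact h.1.1.1
  have hU : ∀ φ ∈ eraseKB P (negKB Q) ∪ Q, IsRML φ := by
    rintro φ (h | h)
    · exact hErml φ h
    · exact hQ.2 φ h
  have hU' : ∀ φ ∈ eraseKB P (negKB Q) ∪ Q', IsRML φ := by
    rintro φ (h | h)
    · exact hErml φ h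
    · exact hQ'.2 φ h
  have h1 : KBEquiv (updateKB P Q) (eraseKB P (negKB Q) ∪ Q) := U4.maxSet_equiv hU
  have h2 : KBEquiv (updateKB P' Q') (eraseKB P (negKB Q) ∪ Q') := by
    unfold updateKB
    rw [← hE]
    exact U4.maxSet_equiv hU'
  have hmid : KBEquiv (eraseKB P (negKB Q) ∪ Q) (eraseKB P (negKB Q) ∪ Q') := by
    constructor
    · rintro φ (h | h)
      · exact U4.setEntails_of_mem (Set.mem_union_left _ h)
      · exact U4.setEntails_mono Set.subset_union_right (hQQ.1 φ h)
    · rintro φ (h | h)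
      · exact U4.setEntails_of_mem (Set.mem_union_left _ h)
      · exact U4.setEntails_mono Set.subset_union_right (hQQ.2 φ h)
  exact U4.kbequiv_trans h1 (U4.kbequiv_trans hmid (U4.kbequiv_symm h2))
end

section
/- KM update postulate U5 holds for PEKB belief update on consistent PEKBs: for all consistent PEKBs P, Q, R, (P ⋄ Q) ⊔ R ⊨ P ⋄ (Q ⊔ R). -/
section U5Aux

variable {Atom Agt : Type}

lemma sat_dia {M : Kripke Atom Agt} {w : M.W} {i : Agt} {φ : Form Atom Agt} :
    Sat M w (Form.dia i φ) ↔ ∃ v, M.R i w v ∧ Sat M v φ := by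
  show (¬ ∀ v, M.R i w v → ¬ Sat M v φ) ↔ _
  push_neg
  rfl

lemma entails_refl (φ : Form Atom Agt) : Entails φ φ :=
  fun _ _ _ h => h φ rfl

lemma entails_trans {φ ψ χ : Form Atom Agt} (h1 : Entails φ ψ) (h2 : Entails ψ χ) :
    Entails φ χ := by
  intro M hM w hw
  apply h2 M hM w
  intro ρ hρ
  rw [Set.mem_singleton_iff] at hρ; subst hρ
  exact h1 M hM w hw

lemma setEntails_of_mem_entails {T : Set (Form Atom Agt)} {φ ψ : Form Atom Agt}
    (hψ : ψ ∈ T) (h : Entails ψ φ) : SetEntails T φ := by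
  intro M hM w hw
  apply h M hM w
  intro ρ hρ
  rw [Set.mem_singleton_iff] at hρ; subst hρ
  exact hw _ hψ

/-- Syntactic weakening relation on RMLs characterizing KD entailment. -/
inductive Weaker : Form Atom Agt → Form Atom Agt → Prop
  | pos (p : Atom) : Weaker (Form.atom p) (Form.atom p)
  | neg (p : Atom) : Weaker (Form.neg (Form.atom p)) (Form.neg (Form.atom p))
  | box {φ ψ : Form Atom Agt} (i : Agt) : Weaker φ ψ → Weaker (Form.box i φ) (Form.box i ψ)
  | boxdia {φ ψ : Form Atom Agt} (i : Agt) : Weaker φ ψ → Weaker (Form.box i φ) (Form.dia i ψ)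
  | dia {φ ψ : Form Atom Agt} (i : Agt) : Weaker φ ψ → Weaker (Form.dia i φ) (Form.dia i ψ)

lemma nnfNeg_box (i : Agt) (φ : Form Atom Agt) :
    nnfNeg (Form.box i φ) = Form.dia i (nnfNeg φ) := rfl

lemma nnfNeg_dia (i : Agt) (φ : Form Atom Agt) :
    nnfNeg (Form.dia i φ) = Form.box i (nnfNeg φ) := rfl

lemma nnfNeg_isRML {φ : Form Atom Agt} (h : IsRML φ) : IsRML (nnfNeg φ) := by
  induction h with
  | pos p => exact IsRML.neg p
  | neg p => exact IsRML.pos p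
  | box i h ih => exact IsRML.dia i ih
  | dia i h ih => exact IsRML.box i ih

lemma sat_nnfNeg {φ : Form Atom Agt} (h : IsRML φ) :
    ∀ (M : Kripke Atom Agt) (w : M.W), Sat M w (nnfNeg φ) ↔ ¬ Sat M w φ := by
  induction h with
  | pos p => intro M w; exact Iff.rfl
  | neg p => intro M w; exact (not_not).symm
  | box i h ih =>
      intro M w
      rw [nnfNeg_box, sat_dia]
      constructor
      · rintro ⟨v, hv, hs⟩ hall
        exact ((ih M v).1 hs) (hall v hv)
      · intro hna
        by_contra hn
        push_neg at hn
        exact hna (fun v hv => by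
          by_contra hns
          exact hn v hv ((ih M v).2 hns))
  | dia i h ih =>
      intro M w
      rw [nnfNeg_dia, sat_dia]
      constructor
      · rintro hall ⟨v, hv, hs⟩
        exact ((ih M v).1 (hall v hv)) hs
      · intro hne v hv
        rw [ih M v]
        intro hs
        exact hne ⟨v, hv, hs⟩

/-- A model built by adding a fresh root below copies of two models. -/
def join (M1 M2 : Kripke Atom Agt) (wa : M1.W) (wb : M2.W) (A B : Agt → Prop)
    (Vr : Atom → Prop) : Kripke Atom Agt where
  W := Option (M1.W ⊕ M2.W)
  val := fun w p =>
    match w with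
    | none => Vr p
    | some (Sum.inl u) => M1.val u p
    | some (Sum.inr u) => M2.val u p
  R := fun j w v =>
    match w, v with
    | none, some (Sum.inl v) => v = wa ∧ A j
    | none, some (Sum.inr v) => v = wb ∧ B j
    | some (Sum.inl u), some (Sum.inl v) => M1.R j u v
    | some (Sum.inr u), some (Sum.inr v) => M2.R j u v
    | _, _ => False

lemma join_serial {M1 M2 : Kripke Atom Agt} {wa wb A B Vr}
    (hAB : ∀ j, A j ∨ B j) (h1 : M1.Serial) (h2 : M2.Serial) :
    (join M1 M2 wa wb A B Vr).Serial := by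
  intro j w
  match w with
  | none =>
      rcases hAB j with h | h
      · exact ⟨some (Sum.inl wa), rfl, h⟩
      · exact ⟨some (Sum.inr wb), rfl, h⟩
  | some (Sum.inl u) =>
      obtain ⟨v, hv⟩ := h1 j u
      exact ⟨some (Sum.inl v), hv⟩
  | some (Sum.inr u) =>
      obtain ⟨v, hv⟩ := h2 j u
      exact ⟨some (Sum.inr v), hv⟩

lemma sat_embed {M M' : Kripke Atom Agt} (g : M.W → M'.W)
    (hval : ∀ u p, M'.val (g u) p ↔ M.val u p)
    (hR1 : ∀ i u v, M.R i u v → M'.R i (g u) (g v))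
    (hR2 : ∀ i u v', M'.R i (g u) v' → ∃ v, v' = g v ∧ M.R i u v) :
    ∀ (χ : Form Atom Agt) (u : M.W), Sat M' (g u) χ ↔ Sat M u χ := by
  intro χ
  induction χ with
  | top => intro u; exact Iff.rfl
  | bot => intro u; exact Iff.rfl
  | atom p => intro u; exact hval u p
  | neg φ ih => intro u; exact not_congr (ih u)
  | and φ ψ ih1 ih2 => intro u; exact and_congr (ih1 u) (ih2 u)
  | box i φ ih =>
      intro u
      constructor
      · intro h v hv
        exact (ih v).1 (h (g v) (hR1 i u v hv))
      · intro h v' hv'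
        obtain ⟨v, rfl, hv⟩ := hR2 i u v' hv'
        exact (ih v).2 (h v hv)

lemma sat_join_inl {M1 M2 : Kripke Atom Agt} {wa wb A B Vr} (χ : Form Atom Agt) (u : M1.W) :
    Sat (join M1 M2 wa wb A B Vr) (some (Sum.inl u)) χ ↔ Sat M1 u χ := by
  refine sat_embed (M := M1) (M' := join M1 M2 wa wb A B Vr) (fun u => some (Sum.inl u)) ?_ ?_ ?_ χ u
  · intro u p; exact Iff.rfl
  · intro i u v h; exact h
  · intro i u v' h
    match v' with
    | none => exact h.elim
    | some (Sum.inl v) => exact ⟨v, rfl, h⟩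
    | some (Sum.inr v) => exact h.elim

lemma sat_join_inr {M1 M2 : Kripke Atom Agt} {wa wb A B Vr} (χ : Form Atom Agt) (u : M2.W) :
    Sat (join M1 M2 wa wb A B Vr) (some (Sum.inr u)) χ ↔ Sat M2 u χ := by
  refine sat_embed (M := M2) (M' := join M1 M2 wa wb A B Vr) (fun u => some (Sum.inr u)) ?_ ?_ ?_ χ u
  · intro u p; exact Iff.rfl
  · intro i u v h; exact h
  · intro i u v' h
    match v' with
    | none => exact h.elim
    | some (Sum.inl v) => exact h.elim
    | some (Sum.inr v) => exact ⟨v, rfl, h⟩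

lemma sat_join_box {M1 M2 : Kripke Atom Agt} {wa wb A B Vr} {j : Agt} {χ : Form Atom Agt} :
    Sat (join M1 M2 wa wb A B Vr) none (Form.box j χ) ↔
      ((A j → Sat M1 wa χ) ∧ (B j → Sat M2 wb χ)) := by
  constructor
  · intro h
    constructor
    · intro hA
      exact (sat_join_inl χ wa).1 (h (some (Sum.inl wa)) ⟨rfl, hA⟩)
    · intro hB
      exact (sat_join_inr χ wb).1 (h (some (Sum.inr wb)) ⟨rfl, hB⟩)
  · rintro ⟨h1, h2⟩ v hv
    rcases v with _ | (v | v)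
    · exact hv.elim
    · obtain ⟨rfl, hA⟩ := hv
      exact (sat_join_inl _ _).2 (h1 hA)
    · obtain ⟨rfl, hB⟩ := hv
      exact (sat_join_inr _ _).2 (h2 hB)

lemma sat_join_dia {M1 M2 : Kripke Atom Agt} {wa wb A B Vr} {j : Agt} {χ : Form Atom Agt} :
    Sat (join M1 M2 wa wb A B Vr) none (Form.dia j χ) ↔
      ((A j ∧ Sat M1 wa χ) ∨ (B j ∧ Sat M2 wb χ)) := by
  refine sat_dia.trans ?_
  constructor
  · rintro ⟨v, hv, hs⟩
    rcases v with _ | (v | v)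
    · exact hv.elim
    · obtain ⟨rfl, hA⟩ := hv
      exact Or.inl ⟨hA, (sat_join_inl _ _).1 hs⟩
    · obtain ⟨rfl, hB⟩ := hv
      exact Or.inr ⟨hB, (sat_join_inr _ _).1 hs⟩
  · rintro (⟨hA, hs⟩ | ⟨hB, hs⟩)
    · exact ⟨some (Sum.inl wa), ⟨rfl, hA⟩, (sat_join_inl χ wa).2 hs⟩
    · exact ⟨some (Sum.inr wb), ⟨rfl, hB⟩, (sat_join_inr χ wb).2 hs⟩

/-- Every RML is satisfiable in a serial model. -/
lemma rml_sat {φ : Form Atom Agt} (h : IsRML φ) :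
    ∃ M : Kripke Atom Agt, M.Serial ∧ ∃ w : M.W, Sat M w φ := by
  induction h with
  | pos p =>
      exact ⟨⟨Unit, fun _ _ => True, fun _ _ _ => True⟩, fun _ _ => ⟨(), trivial⟩, (), trivial⟩
  | neg p =>
      exact ⟨⟨Unit, fun _ _ => False, fun _ _ _ => True⟩, fun _ _ => ⟨(), trivial⟩, (),
        fun h => h⟩
  | box i h ih =>
      obtain ⟨M, hM, w, hw⟩ := ih
      refine ⟨join M M w w (fun _ => True) (fun _ => False) (fun _ => True),
        join_serial (fun _ => Or.inl trivial) hM hM, none, ?_⟩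
      exact sat_join_box.2 ⟨fun _ => hw, fun h => h.elim⟩
  | dia i h ih =>
      obtain ⟨M, hM, w, hw⟩ := ih
      refine ⟨join M M w w (fun _ => True) (fun _ => False) (fun _ => True),
        join_serial (fun _ => Or.inl trivial) hM hM, none, ?_⟩
      exact sat_join_dia.2 (Or.inl ⟨trivial, hw⟩)

/-- Countermodel construction: if `ψ` is not a syntactic weakening of `φ`,
then `φ ∧ ¬ψ` is satisfiable in a serial model. -/
lemma counter {φ : Form Atom Agt} (hφ : IsRML φ) :
    ∀ ψ : Form Atom Agt, IsRML ψ → ¬ Weaker φ ψ →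
    ∃ M : Kripke Atom Agt, M.Serial ∧ ∃ w : M.W, Sat M w φ ∧ ¬ Sat M w ψ := by
  induction hφ with
  | pos p =>
    intro ψ hψ hnw
    cases hψ with
    | pos q =>
      by_cases hq : q = p
      · subst hq; exact absurd (Weaker.pos q) hnw
      · exact ⟨⟨Unit, fun _ r => r = p, fun _ _ _ => True⟩, fun _ _ => ⟨(), trivial⟩, (),
          rfl, hq⟩
    | neg q =>
      exact ⟨⟨Unit, fun _ _ => True, fun _ _ _ => True⟩, fun _ _ => ⟨(), trivial⟩, (),
        trivial, fun h => h trivial⟩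
    | box j hψ' =>
      obtain ⟨M, hM, v, hv⟩ := rml_sat (nnfNeg_isRML hψ')
      refine ⟨join M M v v (fun _ => True) (fun _ => False) (fun _ => True),
        join_serial (fun _ => Or.inl trivial) hM hM, none, trivial, ?_⟩
      intro h
      exact (sat_nnfNeg hψ' M v).1 hv ((sat_join_box.1 h).1 trivial)
    | dia j hψ' =>
      obtain ⟨M, hM, v, hv⟩ := rml_sat (nnfNeg_isRML hψ')
      refine ⟨join M M v v (fun _ => True) (fun _ => False) (fun _ => True),
        join_serial (fun _ => Or.inl trivial) hM hM, none, trivial, ?_⟩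
      intro h
      rcases sat_join_dia.1 h with ⟨_, hs⟩ | ⟨hf, _⟩
      · exact (sat_nnfNeg hψ' M v).1 hv hs
      · exact hf
  | neg p =>
    intro ψ hψ hnw
    cases hψ with
    | pos q =>
      exact ⟨⟨Unit, fun _ _ => False, fun _ _ _ => True⟩, fun _ _ => ⟨(), trivial⟩, (),
        fun h => h, fun h => h⟩
    | neg q =>
      by_cases hq : q = p
      · subst hq; exact absurd (Weaker.neg q) hnw
      · refine ⟨⟨Unit, fun _ r => r = q, fun _ _ _ => True⟩, fun _ _ => ⟨(), trivial⟩, (),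
          ?_, fun h => h rfl⟩
        exact fun h => hq h.symm
    | box j hψ' =>
      obtain ⟨M, hM, v, hv⟩ := rml_sat (nnfNeg_isRML hψ')
      refine ⟨join M M v v (fun _ => True) (fun _ => False) (fun _ => False),
        join_serial (fun _ => Or.inl trivial) hM hM, none, fun h => h, ?_⟩
      intro h
      exact (sat_nnfNeg hψ' M v).1 hv ((sat_join_box.1 h).1 trivial)
    | dia j hψ' =>
      obtain ⟨M, hM, v, hv⟩ := rml_sat (nnfNeg_isRML hψ')
      refine ⟨join M M v v (fun _ => True) (fun _ => False) (fun _ => False),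
        join_serial (fun _ => Or.inl trivial) hM hM, none, fun h => h, ?_⟩
      intro h
      rcases sat_join_dia.1 h with ⟨_, hs⟩ | ⟨hf, _⟩
      · exact (sat_nnfNeg hψ' M v).1 hv hs
      · exact hf
  | box i hφ' ihφ =>
    intro ψ hψ hnw
    obtain ⟨M1, hM1, w1, hw1⟩ := rml_sat hφ'
    cases hψ with
    | pos q =>
      exact ⟨join M1 M1 w1 w1 (fun _ => True) (fun _ => False) (fun _ => False),
        join_serial (fun _ => Or.inl trivial) hM1 hM1, none,
        sat_join_box.2 ⟨fun _ => hw1, fun h => h.elim⟩, fun h => h⟩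
    | neg q =>
      exact ⟨join M1 M1 w1 w1 (fun _ => True) (fun _ => False) (fun _ => True),
        join_serial (fun _ => Or.inl trivial) hM1 hM1, none,
        sat_join_box.2 ⟨fun _ => hw1, fun h => h.elim⟩, fun h => h trivial⟩
    | box j hψ' =>
      by_cases hj : j = i
      · subst hj
        obtain ⟨M, hM, w, hw, hnsat⟩ := ihφ _ hψ' (fun h => hnw (Weaker.box j h))
        refine ⟨join M M w w (fun _ => True) (fun _ => False) (fun _ => True),
          join_serial (fun _ => Or.inl trivial) hM hM, none,
          sat_join_box.2 ⟨fun _ => hw, fun h => h.elim⟩, ?_⟩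
        intro h
        exact hnsat ((sat_join_box.1 h).1 trivial)
      · obtain ⟨M2, hM2, w2, hw2⟩ := rml_sat (nnfNeg_isRML hψ')
        refine ⟨join M1 M2 w1 w2 (fun k => ¬ k = j) (fun k => k = j) (fun _ => True),
          join_serial (fun k => (em (k = j)).symm) hM1 hM2, none,
          sat_join_box.2 ⟨fun _ => hw1, fun hij => (hj hij.symm).elim⟩, ?_⟩
        intro h
        exact (sat_nnfNeg hψ' M2 w2).1 hw2 ((sat_join_box.1 h).2 rfl)
    | dia j hψ' =>
      by_cases hj : j = i
      · subst hj
        obtain ⟨M, hM, w, hw, hnsat⟩ := ihφ _ hψ' (fun h => hnw (Weaker.boxdia j h))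
        refine ⟨join M M w w (fun _ => True) (fun _ => False) (fun _ => True),
          join_serial (fun _ => Or.inl trivial) hM hM, none,
          sat_join_box.2 ⟨fun _ => hw, fun h => h.elim⟩, ?_⟩
        intro h
        rcases sat_join_dia.1 h with ⟨_, hs⟩ | ⟨hf, _⟩
        · exact hnsat hs
        · exact hf
      · obtain ⟨M2, hM2, w2, hw2⟩ := rml_sat (nnfNeg_isRML hψ')
        refine ⟨join M1 M2 w1 w2 (fun k => ¬ k = j) (fun k => k = j) (fun _ => True),
          join_serial (fun k => (em (k = j)).symm) hM1 hM2, none,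
          sat_join_box.2 ⟨fun _ => hw1, fun hij => (hj hij.symm).elim⟩, ?_⟩
        intro h
        rcases sat_join_dia.1 h with ⟨hA, _⟩ | ⟨_, hs⟩
        · exact hA rfl
        · exact (sat_nnfNeg hψ' M2 w2).1 hw2 hs
  | dia i hφ' ihφ =>
    intro ψ hψ hnw
    obtain ⟨M1, hM1, w1, hw1⟩ := rml_sat hφ'
    cases hψ with
    | pos q =>
      exact ⟨join M1 M1 w1 w1 (fun _ => True) (fun _ => False) (fun _ => False),
        join_serial (fun _ => Or.inl trivial) hM1 hM1, none,
        sat_join_dia.2 (Or.inl ⟨trivial, hw1⟩), fun h => h⟩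
    | neg q =>
      exact ⟨join M1 M1 w1 w1 (fun _ => True) (fun _ => False) (fun _ => True),
        join_serial (fun _ => Or.inl trivial) hM1 hM1, none,
        sat_join_dia.2 (Or.inl ⟨trivial, hw1⟩), fun h => h trivial⟩
    | box j hψ' =>
      obtain ⟨M2, hM2, w2, hw2⟩ := rml_sat (nnfNeg_isRML hψ')
      refine ⟨join M1 M2 w1 w2 (fun _ => True) (fun k => k = j) (fun _ => True),
        join_serial (fun _ => Or.inl trivial) hM1 hM2, none,
        sat_join_dia.2 (Or.inl ⟨trivial, hw1⟩), ?_⟩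
      intro h
      exact (sat_nnfNeg hψ' M2 w2).1 hw2 ((sat_join_box.1 h).2 rfl)
    | dia j hψ' =>
      by_cases hj : j = i
      · subst hj
        obtain ⟨M, hM, w, hw, hnsat⟩ := ihφ _ hψ' (fun h => hnw (Weaker.dia j h))
        refine ⟨join M M w w (fun _ => True) (fun _ => False) (fun _ => True),
          join_serial (fun _ => Or.inl trivial) hM hM, none,
          sat_join_dia.2 (Or.inl ⟨trivial, hw⟩), ?_⟩
        intro h
        rcases sat_join_dia.1 h with ⟨_, hs⟩ | ⟨hf, _⟩
        · exact hnsat hs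
        · exact hf
      · obtain ⟨M2, hM2, w2, hw2⟩ := rml_sat (nnfNeg_isRML hψ')
        refine ⟨join M1 M2 w1 w2 (fun k => ¬ k = j) (fun k => k = j) (fun _ => True),
          join_serial (fun k => (em (k = j)).symm) hM1 hM2, none,
          sat_join_dia.2 (Or.inl ⟨fun hij => hj hij.symm, hw1⟩), ?_⟩
        intro h
        rcases sat_join_dia.1 h with ⟨hA, _⟩ | ⟨_, hs⟩
        · exact hA rfl
        · exact (sat_nnfNeg hψ' M2 w2).1 hw2 hs

/-- Completeness of the syntactic weakening relation for KD entailment on RMLs. -/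
lemma entails_to_weaker {φ ψ : Form Atom Agt} (hφ : IsRML φ) (hψ : IsRML ψ)
    (h : Entails φ ψ) : Weaker φ ψ := by
  by_contra hnw
  obtain ⟨M, hM, w, h1, h2⟩ := counter hφ ψ hψ hnw
  refine h2 (h M hM w ?_)
  intro ρ hρ
  rw [Set.mem_singleton_iff] at hρ; subst hρ
  exact h1

/-- Number of diamonds along an RML. -/
def ndia : Form Atom Agt → ℕ
  | Form.neg (Form.box _ (Form.neg φ)) => ndia φ + 1
  | Form.box _ φ => ndia φ
  | _ => 0

lemma ndia_dia (i : Agt) (φ : Form Atom Agt) : ndia (Form.dia i φ) = ndia φ + 1 := rfl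

lemma ndia_box (i : Agt) (φ : Form Atom Agt) : ndia (Form.box i φ) = ndia φ := rfl

lemma weaker_ndia {φ ψ : Form Atom Agt} (h : Weaker φ ψ) :
    ndia φ ≤ ndia ψ ∧ (ndia φ = ndia ψ → φ = ψ) := by
  induction h with
  | pos p => exact ⟨le_refl _, fun _ => rfl⟩
  | neg p => exact ⟨le_refl _, fun _ => rfl⟩
  | box i h ih =>
      constructor
      · rw [ndia_box, ndia_box]; exact ih.1
      · intro he; rw [ndia_box, ndia_box] at he; rw [ih.2 he]
  | boxdia i h ih =>
      constructor
      · rw [ndia_box, ndia_dia]; exact le_trans ih.1 (Nat.le_succ _)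
      · intro he; rw [ndia_box, ndia_dia] at he
        exfalso; have h1 := ih.1; omega
  | dia i h ih =>
      constructor
      · rw [ndia_dia, ndia_dia]; exact Nat.succ_le_succ ih.1
      · intro he; rw [ndia_dia, ndia_dia] at he
        rw [ih.2 (Nat.add_right_cancel he)]

/-- Every member of a set of RMLs is entailed by some maximal member. -/
lemma maxSet_entails {S : Set (Form Atom Agt)} (hS : ∀ χ ∈ S, IsRML χ)
    {φ : Form Atom Agt} (hφ : φ ∈ S) : ∃ ψ ∈ maxSet S, Entails ψ φ := by
  have hne : Set.Nonempty {n | ∃ χ ∈ S, Entails χ φ ∧ ndia χ = n} :=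
    ⟨ndia φ, φ, hφ, entails_refl φ, rfl⟩
  obtain ⟨n, hn, hmin⟩ := (Nat.lt_wfRel.wf).has_min _ hne
  obtain ⟨χ0, hχ0S, hχ0e, hχ0n⟩ := hn
  refine ⟨χ0, ⟨hχ0S, ?_⟩, hχ0e⟩
  intro χ hχS hent
  have hχe : Entails χ φ := entails_trans hent hχ0e
  have hw : Weaker χ χ0 := entails_to_weaker (hS χ hχS) (hS χ0 hχ0S) hent
  have h1 := (weaker_ndia hw).1
  have h2 : ¬ ndia χ < n := hmin (ndia χ) ⟨χ, hχS, hχe, rfl⟩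
  have heq : ndia χ = ndia χ0 := by omega
  rw [(weaker_ndia hw).2 heq]
  exact entails_refl _

end U5Aux

/-- KM update postulate U5 for PEKB belief update on consistent
PEKBs: `(P ⋄ Q) ⊔ R ⊨ P ⋄ (Q ⊔ R)`. -/
theorem km_update_u5 {Atom Agt : Type}
    (P Q R : Set (Form Atom Agt))
    (hP : IsPEKB P) (hQ : IsPEKB Q) (hR : IsPEKB R)
    (hPc : Consistent P) (hQc : Consistent Q) (hRc : Consistent R) :
    KBEntails (updateKB P Q ∪ R) (updateKB P (Q ∪ R)) := by
  intro φ hφ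
  have hφS : φ ∈ eraseKB P (negKB (Q ∪ R)) ∪ (Q ∪ R) := hφ.1
  have hRML1 : ∀ χ ∈ eraseKB P (negKB Q) ∪ Q, IsRML χ := by
    rintro χ (hχ | hχ)
    · exact hχ.1.1.1
    · exact hQ.2 χ hχ
  rcases hφS with hE | hQR
  · have hφd : φ ∈ upSet P \ downSet (negKB (Q ∪ R)) := hE.1
    have hφ2 : φ ∈ upSet P \ downSet (negKB Q) := by
      refine ⟨hφd.1, fun hd => hφd.2 ?_⟩
      obtain ⟨hr, χ, hχ, he⟩ := hd
      exact ⟨hr, χ, Set.image_mono Set.subset_union_left hχ, he⟩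
    have hRML2 : ∀ χ ∈ upSet P \ downSet (negKB Q), IsRML χ := fun χ hχ => hχ.1.1
    obtain ⟨ψ, hψmem, hψe⟩ := maxSet_entails hRML2 hφ2
    obtain ⟨ρ, hρmem, hρe⟩ := maxSet_entails hRML1 (Or.inl hψmem :
      ψ ∈ eraseKB P (negKB Q) ∪ Q)
    exact setEntails_of_mem_entails (Set.mem_union_left R hρmem) (entails_trans hρe hψe)
  · rcases hQR with hQm | hRm
    · obtain ⟨ρ, hρmem, hρe⟩ := maxSet_entails hRML1 (Or.inr hQm :
        φ ∈ eraseKB P (negKB Q) ∪ Q)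
      exact setEntails_of_mem_entails (Set.mem_union_left R hρmem) hρe
    · exact setEntails_of_mem_entails (Set.mem_union_right _ hRm) (entails_refl φ)
end

section
/- KM erasure postulate E3 holds for PEKB belief erasure: for all PEKBs P and Q with P consistent and Q nonempty, P ⊖ Q does not entail Q; that is, there exists φ ∈ Q with P ⊖ Q ⊭ φ. -/
namespace E3Aux

variable {Atom Agt : Type}

lemma entails_iff {φ ψ : Form Atom Agt} :
    Entails φ ψ ↔ ∀ (M : Kripke Atom Agt), M.Serial → ∀ w, Sat M w φ → Sat M w ψ := by
  constructor
  · intro h M hs w hw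
    refine h M hs w ?_
    intro τ hτ
    simp only [Set.mem_singleton_iff] at hτ
    subst hτ; exact hw
  · intro h M hs w hw
    exact h M hs w (hw φ rfl)

lemma entails_refl (φ : Form Atom Agt) : Entails φ φ :=
  entails_iff.mpr (fun _ _ _ h => h)

lemma sat_dia_iff {M : Kripke Atom Agt} {w : M.W} {i : Agt} {χ : Form Atom Agt} :
    Sat M w (Form.dia i χ) ↔ ∃ v, M.R i w v ∧ Sat M v χ := by
  simp only [Form.dia, Sat]
  push_neg
  rfl

lemma mono_box {i : Agt} {χ ψ : Form Atom Agt} (h : Entails χ ψ) :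
    Entails (Form.box i χ) (Form.box i ψ) := by
  rw [entails_iff] at h ⊢
  intro M hs w hw v hv
  exact h M hs v (hw v hv)

lemma mono_box_dia {i : Agt} {χ ψ : Form Atom Agt} (h : Entails χ ψ) :
    Entails (Form.box i χ) (Form.dia i ψ) := by
  rw [entails_iff] at h ⊢
  intro M hs w hw
  obtain ⟨v, hv⟩ := hs i w
  exact sat_dia_iff.mpr ⟨v, hv, h M hs v (hw v hv)⟩

lemma mono_dia {i : Agt} {χ ψ : Form Atom Agt} (h : Entails χ ψ) :
    Entails (Form.dia i χ) (Form.dia i ψ) := by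
  rw [entails_iff] at h ⊢
  intro M hs w hw
  obtain ⟨v, hv, hsat⟩ := sat_dia_iff.mp hw
  exact sat_dia_iff.mpr ⟨v, hv, h M hs v hsat⟩

/-- Valuation of the constraint model. -/
def ConsVal (M : Kripke Atom Agt) (a : M.W × Option (Form Atom Agt)) (p : Atom) : Prop :=
  match a with
  | (w, some (Form.atom q)) => M.val w p ∧ p ≠ q
  | (w, some (Form.neg (Form.atom q))) => M.val w p ∨ p = q
  | (w, _) => M.val w p

/-- Accessibility of the constraint model. -/
def ConsR (M : Kripke Atom Agt) (hser : M.Serial) (j : Agt)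
    (a b : M.W × Option (Form Atom Agt)) : Prop :=
  match a, b with
  | (w, some (Form.box i ψ)), (v, x) =>
      (M.R j w v ∧ x = none) ∨ (j = i ∧ v = (hser i w).choose ∧ x = some ψ)
  | (w, some (Form.neg (Form.box i (Form.neg ψ)))), (v, x) =>
      M.R j w v ∧ ((j = i ∧ x = some ψ) ∨ (j ≠ i ∧ x = none))
  | (w, _), (v, x) => M.R j w v ∧ x = none

def ConsModel (M : Kripke Atom Agt) (hser : M.Serial) : Kripke Atom Agt :=
  ⟨M.W × Option (Form Atom Agt), ConsVal M, ConsR M hser⟩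

-- definitional spec lemmas
section spec
variable {M : Kripke Atom Agt} {hser : M.Serial} {j : Agt} {w v : M.W}
  {x : Option (Form Atom Agt)}

lemma consR_none : ConsR M hser j (w, none) (v, x) ↔ (M.R j w v ∧ x = none) := Iff.rfl

lemma consR_atom {p : Atom} :
    ConsR M hser j (w, some (Form.atom p)) (v, x) ↔ (M.R j w v ∧ x = none) := Iff.rfl

lemma consR_negatom {p : Atom} :
    ConsR M hser j (w, some (Form.neg (Form.atom p))) (v, x) ↔ (M.R j w v ∧ x = none) := Iff.rfl

lemma consR_box {i : Agt} {ψ : Form Atom Agt} :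
    ConsR M hser j (w, some (Form.box i ψ)) (v, x) ↔
      ((M.R j w v ∧ x = none) ∨ (j = i ∧ v = (hser i w).choose ∧ x = some ψ)) := Iff.rfl

lemma consR_dia {i : Agt} {ψ : Form Atom Agt} :
    ConsR M hser j (w, some (Form.dia i ψ)) (v, x) ↔
      (M.R j w v ∧ ((j = i ∧ x = some ψ) ∨ (j ≠ i ∧ x = none))) := Iff.rfl

lemma consVal_none {p : Atom} : ConsVal M (w, none) p ↔ M.val w p := Iff.rfl

lemma consVal_atom {p q : Atom} :
    ConsVal M (w, some (Form.atom q)) p ↔ (M.val w p ∧ p ≠ q) := Iff.rfl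

lemma consVal_negatom {p q : Atom} :
    ConsVal M (w, some (Form.neg (Form.atom q))) p ↔ (M.val w p ∨ p = q) := Iff.rfl

lemma consVal_box {p : Atom} {i : Agt} {ψ : Form Atom Agt} :
    ConsVal M (w, some (Form.box i ψ)) p ↔ M.val w p := Iff.rfl

lemma consVal_dia {p : Atom} {i : Agt} {ψ : Form Atom Agt} :
    ConsVal M (w, some (Form.dia i ψ)) p ↔ M.val w p := Iff.rfl

end spec

lemma cons_serial (M : Kripke Atom Agt) (hser : M.Serial) : (ConsModel M hser).Serial := by
  rintro j ⟨w, o⟩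
  match o with
  | none => exact ⟨((hser j w).choose, none), (hser j w).choose_spec, rfl⟩
  | some (Form.top) => exact ⟨((hser j w).choose, none), (hser j w).choose_spec, rfl⟩
  | some (Form.bot) => exact ⟨((hser j w).choose, none), (hser j w).choose_spec, rfl⟩
  | some (Form.atom p) => exact ⟨((hser j w).choose, none), (hser j w).choose_spec, rfl⟩
  | some (Form.and a b) => exact ⟨((hser j w).choose, none), (hser j w).choose_spec, rfl⟩
  | some (Form.box i ψ) =>
      exact ⟨((hser j w).choose, none), Or.inl ⟨(hser j w).choose_spec, rfl⟩⟩
  | some (Form.neg (Form.top)) => exact ⟨((hser j w).choose, none), (hser j w).choose_spec, rfl⟩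
  | some (Form.neg (Form.bot)) => exact ⟨((hser j w).choose, none), (hser j w).choose_spec, rfl⟩
  | some (Form.neg (Form.atom p)) => exact ⟨((hser j w).choose, none), (hser j w).choose_spec, rfl⟩
  | some (Form.neg (Form.neg a)) => exact ⟨((hser j w).choose, none), (hser j w).choose_spec, rfl⟩
  | some (Form.neg (Form.and a b)) => exact ⟨((hser j w).choose, none), (hser j w).choose_spec, rfl⟩
  | some (Form.neg (Form.box i (Form.top))) => exact ⟨((hser j w).choose, none), (hser j w).choose_spec, rfl⟩
  | some (Form.neg (Form.box i (Form.bot))) => exact ⟨((hser j w).choose, none), (hser j w).choose_spec, rfl⟩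
  | some (Form.neg (Form.box i (Form.atom p))) => exact ⟨((hser j w).choose, none), (hser j w).choose_spec, rfl⟩
  | some (Form.neg (Form.box i (Form.and a b))) => exact ⟨((hser j w).choose, none), (hser j w).choose_spec, rfl⟩
  | some (Form.neg (Form.box i (Form.box i' a))) => exact ⟨((hser j w).choose, none), (hser j w).choose_spec, rfl⟩
  | some (Form.neg (Form.box i (Form.neg ψ))) =>
      by_cases h : j = i
      · exact ⟨((hser j w).choose, some ψ), (hser j w).choose_spec, Or.inl ⟨h, rfl⟩⟩
      · exact ⟨((hser j w).choose, none), (hser j w).choose_spec, Or.inr ⟨h, rfl⟩⟩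

lemma sat_none (M : Kripke Atom Agt) (hser : M.Serial) :
    ∀ (χ : Form Atom Agt) (v : M.W),
      Sat (ConsModel M hser) (v, none) χ ↔ Sat M v χ := by
  intro χ
  induction χ with
  | top => intro v; exact Iff.rfl
  | bot => intro v; exact Iff.rfl
  | atom p => intro v; exact Iff.rfl
  | neg a ih => intro v; exact not_congr (ih v)
  | and a b iha ihb => intro v; exact and_congr (iha v) (ihb v)
  | box j a ih =>
      intro v
      constructor
      · intro h u hu
        exact (ih u).mp (h (u, none) ⟨hu, rfl⟩)
      · rintro h ⟨u, x⟩ hux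
        obtain ⟨hu, hx⟩ := (consR_none (M:=M) (hser:=hser)).mp hux
        subst hx
        exact (ih u).mpr (h u hu)

theorem consMain (M : Kripke Atom Agt) (hser : M.Serial) :
    ∀ {φ : Form Atom Agt}, IsRML φ → ∀ w : M.W,
      (¬ Sat (ConsModel M hser) (w, some φ) φ) ∧
      (∀ ψ, IsRML ψ → Sat M w ψ → ¬ Entails ψ φ →
        Sat (ConsModel M hser) (w, some φ) ψ) := by
  intro φ hφ
  induction hφ with
  | pos p =>
      intro w
      constructor
      · intro h
        exact ((consVal_atom (M := M) (q := p)).mp h).2 rfl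
      · intro ψ hψ hsat hne
        cases hψ with
        | pos q =>
            refine (consVal_atom (M := M) (q := p)).mpr ⟨hsat, ?_⟩
            intro hq; subst hq; exact hne (entails_refl _)
        | neg q =>
            intro h
            exact hsat ((consVal_atom (M := M) (q := p)).mp h).1
        | box j hχ =>
            rintro ⟨u, x⟩ hux
            obtain ⟨hu, hx⟩ := (consR_atom (M := M) (hser := hser) (p := p)).mp hux
            subst hx
            exact (sat_none M hser _ u).mpr (hsat u hu)
        | dia j hχ =>
            obtain ⟨u, hu, hχu⟩ := sat_dia_iff.mp hsat
            exact sat_dia_iff.mpr ⟨(u, none),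
              (consR_atom (M := M) (hser := hser) (p := p)).mpr ⟨hu, rfl⟩,
              (sat_none M hser _ u).mpr hχu⟩
  | neg p =>
      intro w
      constructor
      · intro h
        exact h ((consVal_negatom (M := M) (q := p)).mpr (Or.inr rfl))
      · intro ψ hψ hsat hne
        cases hψ with
        | pos q =>
            exact (consVal_negatom (M := M) (q := p)).mpr (Or.inl hsat)
        | neg q =>
            intro h
            rcases (consVal_negatom (M := M) (q := p)).mp h with h' | h'
            · exact hsat h'
            · subst h'; exact hne (entails_refl _)
        | box j hχ =>
            rintro ⟨u, x⟩ hux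
            obtain ⟨hu, hx⟩ := (consR_negatom (M := M) (hser := hser) (p := p)).mp hux
            subst hx
            exact (sat_none M hser _ u).mpr (hsat u hu)
        | dia j hχ =>
            obtain ⟨u, hu, hχu⟩ := sat_dia_iff.mp hsat
            exact sat_dia_iff.mpr ⟨(u, none),
              (consR_negatom (M := M) (hser := hser) (p := p)).mpr ⟨hu, rfl⟩,
              (sat_none M hser _ u).mpr hχu⟩
  | box i hφ0 ih =>
      rename_i φ0
      intro w
      constructor
      · intro h
        exact (ih (hser i w).choose).1
          (h ((hser i w).choose, some φ0) (Or.inr ⟨rfl, rfl, rfl⟩))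
      · intro ψ hψ hsat hne
        cases hψ with
        | pos q => exact (consVal_box (M := M) (i := i) (ψ := φ0)).mpr hsat
        | neg q =>
            intro h
            exact hsat ((consVal_box (M := M) (i := i) (ψ := φ0)).mp h)
        | box j hχ =>
            rename_i χ
            rintro ⟨u, x⟩ hux
            rcases (consR_box (M := M) (hser := hser) (i := i) (ψ := φ0)).mp hux with ⟨hu, hx⟩ | ⟨hj, hv, hx⟩
            · subst hx
              exact (sat_none M hser _ u).mpr (hsat u hu)
            · subst hj; subst hv; subst hx
              exact (ih _).2 χ hχ (hsat _ (hser j w).choose_spec)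
                (fun hc => hne (mono_box hc))
        | dia j hχ =>
            obtain ⟨u, hu, hχu⟩ := sat_dia_iff.mp hsat
            exact sat_dia_iff.mpr ⟨(u, none),
              Or.inl ⟨hu, rfl⟩,
              (sat_none M hser _ u).mpr hχu⟩
  | dia i hφ0 ih =>
      rename_i φ0
      intro w
      constructor
      · intro h
        apply h
        rintro ⟨u, x⟩ hux
        obtain ⟨hu, hc⟩ := (consR_dia (M := M) (hser := hser) (i := i) (ψ := φ0)).mp hux
        rcases hc with ⟨-, hx⟩ | ⟨hii, -⟩
        · subst hx
          exact (ih u).1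
        · exact absurd rfl hii
      · intro ψ hψ hsat hne
        cases hψ with
        | pos q => exact (consVal_dia (M := M) (i := i) (ψ := φ0)).mpr hsat
        | neg q =>
            intro h
            exact hsat ((consVal_dia (M := M) (i := i) (ψ := φ0)).mp h)
        | box j hχ =>
            rename_i χ
            rintro ⟨u, x⟩ hux
            obtain ⟨hu, hc⟩ := (consR_dia (M := M) (hser := hser) (i := i) (ψ := φ0)).mp hux
            rcases hc with ⟨hj, hx⟩ | ⟨hj, hx⟩
            · subst hj; subst hx
              exact (ih u).2 χ hχ (hsat u hu) (fun hc => hne (mono_box_dia hc))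
            · subst hx
              exact (sat_none M hser _ u).mpr (hsat u hu)
        | dia j hχ =>
            rename_i χ
            obtain ⟨u, hu, hχu⟩ := sat_dia_iff.mp hsat
            by_cases hj : j = i
            · subst hj
              exact sat_dia_iff.mpr ⟨(u, some φ0),
                (consR_dia (M := M) (hser := hser) (i := j) (ψ := φ0)).mpr ⟨hu, Or.inl ⟨rfl, rfl⟩⟩,
                (ih u).2 χ hχ hχu (fun hc => hne (mono_dia hc))⟩
            · exact sat_dia_iff.mpr ⟨(u, none),
                (consR_dia (M := M) (hser := hser) (i := i) (ψ := φ0)).mpr ⟨hu, Or.inr ⟨hj, rfl⟩⟩,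
                (sat_none M hser _ u).mpr hχu⟩

end E3Aux


/-- KM erasure postulate E3 for PEKB belief erasure: if `P` is
consistent and `Q` is nonempty, then `P ⊖ Q` does not entail `Q`: some
`φ ∈ Q` is not entailed by `P ⊖ Q`. -/
theorem km_erasure_e3 {Atom Agt : Type}
    (P Q : Set (Form Atom Agt)) (hP : IsPEKB P) (hQ : IsPEKB Q)
    (hcons : Consistent P) (hne : Q.Nonempty) :
    ∃ φ ∈ Q, ¬ SetEntails (eraseKB P Q) φ := by
  obtain ⟨φ, hφQ⟩ := hne
  obtain ⟨M, hser, w, hw⟩ := hcons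
  refine ⟨φ, hφQ, fun hent => ?_⟩
  have hmain := E3Aux.consMain M hser (hQ.2 φ hφQ) w
  apply hmain.1
  apply hent (E3Aux.ConsModel M hser) (E3Aux.cons_serial M hser) (w, some φ)
  intro ψ hψ
  simp only [eraseKB, maxSet, upSet, downSet, Set.mem_sep_iff, Set.mem_diff,
    Set.mem_setOf_eq] at hψ
  obtain ⟨⟨⟨hRML, χ, hχP, hχψ⟩, hdown⟩, -⟩ := hψ
  have hsat : Sat M w ψ := E3Aux.entails_iff.mp hχψ M hser w (hw χ hχP)
  have hnent : ¬ Entails ψ φ := fun hc => hdown ⟨hRML, φ, hφQ, hc⟩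
  exact hmain.2 ψ hRML hsat hnent
end

section
/- KM erasure postulate E5 fails for PEKB belief erasure: for any agent i and atomic proposition p, taking P = {B_i p} and Q = {◇_i p}, one has P ⊖ Q = ∅ and (P ⊖ Q) ⊔ Q = {◇_i p}, which does not entail B_i p; hence (P ⊖ Q) ⊔ Q ⊭ P. -/
section AuxE5

variable {Atom Agt : Type}

/-- Evaluation of a formula in a one-world reflexive model with constant valuation `b`. -/
def evalC (b : Bool) : Form Atom Agt → Prop
  | Form.top => True
  | Form.bot => False
  | Form.atom _ => b = true
  | Form.neg φ => ¬ evalC b φ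
  | Form.and φ ψ => evalC b φ ∧ evalC b ψ
  | Form.box _ φ => evalC b φ

/-- At a "trap" world (only successor is itself, constant valuation `b`),
satisfaction coincides with `evalC b`. -/
lemma sat_trap (M : Kripke Atom Agt) (z : M.W) (b : Bool)
    (hR : ∀ k x, M.R k z x ↔ x = z) (hv : ∀ a, M.val z a ↔ b = true) :
    ∀ φ, Sat M z φ ↔ evalC b φ := by
  intro φ
  induction φ with
  | top => simp [Sat, evalC]
  | bot => simp [Sat, evalC]
  | atom a => simpa [Sat, evalC] using hv a
  | neg φ ih => simp only [Sat, evalC]; exact not_congr ih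
  | and φ ψ ih1 ih2 => simp only [Sat, evalC]; exact and_congr ih1 ih2
  | box j φ ih =>
      simp only [Sat, evalC]
      constructor
      · intro h; exact ih.mp (h z ((hR j z).mpr rfl))
      · intro h v hv'
        have : v = z := (hR j v).mp hv'
        subst this; exact ih.mpr h

/-- Every RML is falsified in one of the two constant one-world models. -/
lemma exists_false_evalC {φ : Form Atom Agt} (h : IsRML φ) : ∃ b, ¬ evalC b φ := by
  induction h with
  | pos q => exact ⟨false, by simp [evalC]⟩
  | neg q => exact ⟨true, by simp [evalC]⟩
  | box j _ ih => obtain ⟨b, hb⟩ := ih; exact ⟨b, by simpa [evalC] using hb⟩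
  | dia j _ ih =>
      obtain ⟨b, hb⟩ := ih
      exact ⟨b, by simpa [Form.dia, evalC] using hb⟩

/-- Two-world model: root `false` (all atoms true) whose only successors are a
trap world `true` with constant valuation `b`. -/
def falsModel (b : Bool) : Kripke Atom Agt :=
  ⟨Bool, fun w _ => w = false ∨ b = true, fun _ _ v => v = true⟩

lemma falsModel_serial (b : Bool) : (falsModel (Atom := Atom) (Agt := Agt) b).Serial :=
  fun _ _ => ⟨true, rfl⟩

lemma falsModel_trap (b : Bool) :
    ∀ φ : Form Atom Agt, Sat (falsModel b) true φ ↔ evalC b φ := by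
  apply sat_trap
  · intro k x; simp [falsModel]
  · intro a; simp [falsModel]

/-- For every RML `χ ≠ p`, some serial pointed model satisfies `p` and falsifies `χ`. -/
lemma exists_p_and_not {p : Atom} {χ : Form Atom Agt} (h : IsRML χ)
    (hne : χ ≠ Form.atom p) :
    ∃ M : Kripke Atom Agt, M.Serial ∧ ∃ w : M.W,
      Sat M w (Form.atom p) ∧ ¬ Sat M w χ := by
  induction h with
  | pos q =>
      have hqp : q ≠ p := by intro hq; exact hne (by rw [hq])
      refine ⟨⟨Unit, fun _ a => a ≠ q, fun _ _ _ => True⟩, fun _ _ => ⟨(), trivial⟩,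
        (), ?_, ?_⟩
      · exact hqp.symm
      · simp [Sat]
  | neg q =>
      refine ⟨⟨Unit, fun _ _ => True, fun _ _ _ => True⟩, fun _ _ => ⟨(), trivial⟩,
        (), trivial, ?_⟩
      simp [Sat]
  | box j hχ _ =>
      obtain ⟨b, hb⟩ := exists_false_evalC hχ
      refine ⟨falsModel b, falsModel_serial b, false, Or.inl rfl, ?_⟩
      intro hs
      exact hb ((falsModel_trap b _).mp (hs true rfl))
  | dia j hχ _ =>
      obtain ⟨b, hb⟩ := exists_false_evalC hχ
      refine ⟨falsModel b, falsModel_serial b, false, Or.inl rfl, ?_⟩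
      intro hs
      refine hs ?_
      intro v hv
      have : v = true := hv
      subst this
      intro hc
      exact hb ((falsModel_trap b _).mp hc)

/-- Add a fresh root below a pointed model; every successor of the root is the point. -/
def optModel (N : Kripke Atom Agt) (w0 : N.W) : Kripke Atom Agt where
  W := Option N.W
  val x a := match x with
    | none => True
    | some a' => N.val a' a
  R k x y := match x with
    | none => y = some w0
    | some a => ∃ b, y = some b ∧ N.R k a b

lemma optModel_serial {N : Kripke Atom Agt} (hN : N.Serial) (w0 : N.W) :
    (optModel N w0).Serial := by
  intro k x
  cases x with
  | none => exact ⟨some w0, rfl⟩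
  | some a =>
      obtain ⟨b, hb⟩ := hN k a
      exact ⟨some b, b, rfl, hb⟩

lemma sat_optModel {N : Kripke Atom Agt} (w0 : N.W) (φ : Form Atom Agt) :
    ∀ a : N.W, Sat (optModel N w0) (some a) φ ↔ Sat N a φ := by
  induction φ with
  | top => intro a; simp [Sat]
  | bot => intro a; simp [Sat]
  | atom q => intro a; simp [Sat, optModel]
  | neg φ ih => intro a; simp only [Sat]; exact not_congr (ih a)
  | and φ ψ ih1 ih2 => intro a; simp only [Sat]; exact and_congr (ih1 a) (ih2 a)
  | box j φ ih =>
      intro a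
      simp only [Sat]
      constructor
      · intro h b hb
        exact (ih b).mp (h (some b) ⟨b, rfl, hb⟩)
      · intro h y hy
        obtain ⟨b, rfl, hb⟩ := hy
        exact (ih b).mpr (h b hb)

/-- Root with `j`-successor a `b`-trap world and all other successors an all-true
trap world. -/
def splitModel (j : Agt) (b : Bool) : Kripke Atom Agt where
  W := Option Bool
  val x _ := match x with
    | some false => b = true
    | _ => True
  R k x y := match x with
    | none => (k = j ∧ y = some false) ∨ (k ≠ j ∧ y = some true)
    | some w => y = some w

lemma splitModel_serial (j : Agt) (b : Bool) :
    (splitModel (Atom := Atom) j b).Serial := by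
  intro k x
  cases x with
  | none =>
      by_cases hk : k = j
      · exact ⟨some false, Or.inl ⟨hk, rfl⟩⟩
      · exact ⟨some true, Or.inr ⟨hk, rfl⟩⟩
  | some w => exact ⟨some w, rfl⟩

lemma splitModel_trap_false (j : Agt) (b : Bool) :
    ∀ φ : Form Atom Agt, Sat (splitModel j b) (some false) φ ↔ evalC b φ := by
  apply sat_trap
  · intro k x; simp [splitModel]
  · intro a; simp [splitModel]

/-- Classification: an RML entailed by `B_i p` is `B_i p` or `◇_i p`. -/
lemma classify_rml {i : Agt} {p : Atom} {ψ : Form Atom Agt} (h : IsRML ψ)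
    (he : Entails (Form.box i (Form.atom p)) ψ) :
    ψ = Form.box i (Form.atom p) ∨ ψ = Form.dia i (Form.atom p) := by
  have he' : ∀ (M : Kripke Atom Agt), M.Serial → ∀ w : M.W,
      Sat M w (Form.box i (Form.atom p)) → Sat M w ψ := by
    intro M hM w hw
    exact he M hM w (by intro χ hχ; rw [Set.mem_singleton_iff] at hχ; subst hχ; exact hw)
  cases h with
  | pos q =>
      exfalso
      have := he' ⟨Bool, fun w _ => w = true, fun _ _ v => v = true⟩
        (fun _ _ => ⟨true, rfl⟩) false
        (by intro v hv; exact hv) 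
      exact Bool.false_ne_true this
  | neg q =>
      exfalso
      have := he' ⟨Unit, fun _ _ => True, fun _ _ _ => True⟩
        (fun _ _ => ⟨(), trivial⟩) ()
        (by intro v _; trivial)
      exact this trivial
  | @box j χ hχ =>
      by_cases hij : j = i
      · subst hij
        by_cases hcp : χ = Form.atom p
        · subst hcp; exact Or.inl rfl
        · exfalso
          obtain ⟨N, hN, w0, hp, hnχ⟩ := exists_p_and_not hχ hcp
          have hroot : Sat (optModel N w0) none (Form.box j (Form.atom p)) := by
            intro y hy
            have : y = some w0 := hy
            subst this
            exact hp
          have := he' (optModel N w0) (optModel_serial hN w0) none hroot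
          have := this (some w0) rfl
          exact hnχ ((sat_optModel w0 χ w0).mp this)
      · exfalso
        obtain ⟨b, hb⟩ := exists_false_evalC hχ
        have hroot : Sat (splitModel j b) none (Form.box i (Form.atom p)) := by
          intro y hy
          rcases hy with ⟨hji, _⟩ | ⟨_, hy⟩
          · exact absurd hji.symm hij
          · subst hy; trivial
        have := he' (splitModel j b) (splitModel_serial j b) none hroot
        have := this (some false) (Or.inl ⟨rfl, rfl⟩)
        exact hb ((splitModel_trap_false j b χ).mp this)
  | @dia j χ hχ =>
      by_cases hij : j = i
      · subst hij
        by_cases hcp : χ = Form.atom p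
        · subst hcp; exact Or.inr rfl
        · exfalso
          obtain ⟨N, hN, w0, hp, hnχ⟩ := exists_p_and_not hχ hcp
          have hroot : Sat (optModel N w0) none (Form.box j (Form.atom p)) := by
            intro y hy
            have : y = some w0 := hy
            subst this
            exact hp
          have hdia := he' (optModel N w0) (optModel_serial hN w0) none hroot
          refine hdia ?_
          intro y hy
          have : y = some w0 := hy
          subst this
          intro hc
          exact hnχ ((sat_optModel w0 χ w0).mp hc)
      · exfalso
        obtain ⟨b, hb⟩ := exists_false_evalC hχ
        have hroot : Sat (splitModel j b) none (Form.box i (Form.atom p)) := by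
          intro y hy
          rcases hy with ⟨hji, _⟩ | ⟨_, hy⟩
          · exact absurd hji.symm hij
          · subst hy; trivial
        have hdia := he' (splitModel j b) (splitModel_serial j b) none hroot
        refine hdia ?_
        intro y hy
        rcases hy with ⟨_, hy⟩ | ⟨hjj, _⟩
        · subst hy
          intro hc
          exact hb ((splitModel_trap_false j b χ).mp hc)
        · exact absurd rfl hjj

lemma box_entails_dia (i : Agt) (p : Atom) :
    Entails (Form.box i (Form.atom p)) (Form.dia i (Form.atom p) : Form Atom Agt) := by
  intro M hM w h
  have hb : Sat M w (Form.box i (Form.atom p)) := h _ (Set.mem_singleton _)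
  obtain ⟨v, hv⟩ := hM i w
  intro hc
  exact hc v hv (hb v hv)

lemma key_diff_empty (i : Agt) (p : Atom) :
    upSet ({Form.box i (Form.atom p)} : Set (Form Atom Agt)) \
      downSet {Form.dia i (Form.atom p)} = ∅ := by
  ext ψ
  simp only [Set.mem_diff, Set.mem_empty_iff_false, iff_false, not_and, not_not]
  rintro ⟨hr, φ, hφ, hent⟩
  rw [Set.mem_singleton_iff] at hφ
  subst hφ
  rcases classify_rml hr hent with h | h
  · subst h
    exact ⟨IsRML.box i (IsRML.pos p), Form.dia i (Form.atom p), rfl,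
      box_entails_dia i p⟩
  · subst h
    exact ⟨IsRML.dia i (IsRML.pos p), Form.dia i (Form.atom p), rfl,
      entails_refl _⟩

end AuxE5

/-- KM erasure postulate E5 fails for PEKB belief erasure: with
`P = {B_i p}` and `Q = {◇_i p}` one has `P ⊖ Q = ∅`,
`(P ⊖ Q) ⊔ Q = {◇_i p}`, and `(P ⊖ Q) ⊔ Q ⊭ P`. -/
theorem km_erasure_e5_fails {Atom Agt : Type} (i : Agt) (p : Atom) :
    eraseKB ({Form.box i (Form.atom p)} : Set (Form Atom Agt))
        {Form.dia i (Form.atom p)} = ∅ ∧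
    eraseKB ({Form.box i (Form.atom p)} : Set (Form Atom Agt))
        {Form.dia i (Form.atom p)} ∪ {Form.dia i (Form.atom p)}
      = {Form.dia i (Form.atom p)} ∧
    ¬ KBEntails
        (eraseKB ({Form.box i (Form.atom p)} : Set (Form Atom Agt))
            {Form.dia i (Form.atom p)} ∪ {Form.dia i (Form.atom p)})
        {Form.box i (Form.atom p)} := by
  have herase : eraseKB ({Form.box i (Form.atom p)} : Set (Form Atom Agt))
      {Form.dia i (Form.atom p)} = ∅ := by
    unfold eraseKB
    rw [key_diff_empty]
    ext ψ
    simp [maxSet]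
  refine ⟨herase, ?_, ?_⟩
  · rw [herase]; simp
  · rw [herase]
    simp only [Set.empty_union]
    intro h
    have hcm := h (Form.box i (Form.atom p)) rfl
      ⟨Bool, fun w _ => w = true, fun _ _ _ => True⟩
      (fun _ _ => ⟨true, trivial⟩) false
    have hsat : ∀ ψ ∈ ({Form.dia i (Form.atom p)} : Set (Form Atom Agt)),
        Sat ⟨Bool, fun w _ => w = true, fun _ _ _ => True⟩ false ψ := by
      intro ψ hψ
      rw [Set.mem_singleton_iff] at hψ
      subst hψ
      intro hc
      exact hc true trivial rfl
    have := hcm hsat false trivial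
    exact Bool.false_ne_true this
end
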